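/- Let g be a Riemannian metric in boundary harmonic coordinates on B⁺(x,r), and let N and Θ denote the outward-pointing unit normal and second fundamental form of B̲⁺(x,r), respectively. Then on B̲⁺(x,r) the inverse metric components satisfy the Neumann boundary relations N(g^{33}) = 2 (tr Θ) g^{33} and N(g^{3A}) = (tr Θ) g^{3A} − (1/2)(g^{33})^{−1/2} g^{Am} ∂_m g^{33} for A = 1,2 (summation over m = 1,2,3). -/

import Mathlib

noncomputable section

open Set MeasureTheory Filter Topology
open scoped ENNReal NNReal BigOperators

/-! ## Euclidean spaces, the upper half space and half balls -/

abbrev E3 : Type := EuclideanSpace ℝ (Fin 3)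
abbrev E2 : Type := EuclideanSpace ℝ (Fin 2)

/-- Matrix-valued coordinate representations of Riemannian metrics on (subsets of) `ℝ³`. -/
abbrev Met3 : Type := E3 → Matrix (Fin 3) (Fin 3) ℝ
/-- Matrix-valued coordinate representations of Riemannian metrics on (subsets of) `ℝ²`. -/
abbrev Met2 : Type := E2 → Matrix (Fin 2) (Fin 2) ℝ

def e3 (i : Fin 3) : E3 := EuclideanSpace.single i (1:ℝ)
def e2 (A : Fin 2) : E2 := EuclideanSpace.single A (1:ℝ)

/-- The closed upper half space `ℍ⁺ = {x ∈ ℝ³ : x³ ≥ 0}`. -/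
def upperHalf3 : Set E3 := {y : E3 | 0 ≤ y 2}

/-- The half ball `B⁺(x,r) = B(x,r) ∩ ℍ⁺`. -/
def Bplus (x : E3) (r : ℝ) : Set E3 := Metric.ball x r ∩ upperHalf3

/-- The flat boundary part `B̲⁺(x,r) = B⁺(x,r) ∩ {x³ = 0}`. -/
def BplusBot (x : E3) (r : ℝ) : Set E3 := Bplus x r ∩ {y : E3 | y 2 = 0}

/-- The inclusion of `ℝ²` into `ℝ³` as the plane `{x³ = 0}`. -/
def iota (z : E2) : E3 := z 0 • e3 0 + z 1 • e3 1

/-- `B̲⁺(x,r)`, viewed as a subset of `ℝ²`. -/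
def bot2 (x : E3) (r : ℝ) : Set E2 := {z : E2 | iota z ∈ BplusBot x r}

/-- The inclusion of boundary-tangential indices `{1,2}` into `{1,2,3}`. -/
def emb23 : Fin 2 → Fin 3 := Fin.castSucc

/-! ## Partial derivatives -/

/-- Partial derivative (within a set) in direction `i` for functions on `ℝ³`. -/
def pd3 (Ω : Set E3) (i : Fin 3) (f : E3 → ℝ) (y : E3) : ℝ := fderivWithin ℝ f Ω y (e3 i)

/-- Partial derivative (within a set) in direction `A` for functions on `ℝ²`. -/
def pd2 (Ω : Set E2) (A : Fin 2) (f : E2 → ℝ) (z : E2) : ℝ := fderivWithin ℝ f Ω z (e2 A)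

/-- Iterated coordinate partial derivatives `∂^σ` on `ℝ³`. -/
def iterPd3 (Ω : Set E3) : (k : ℕ) → (Fin k → Fin 3) → (E3 → ℝ) → (E3 → ℝ)
  | 0, _, f => f
  | k+1, σ, f => pd3 Ω (σ 0) (iterPd3 Ω k (fun a => σ a.succ) f)

/-- Iterated coordinate partial derivatives `∂̸^σ` on `ℝ²`. -/
def iterPd2 (Ω : Set E2) : (k : ℕ) → (Fin k → Fin 2) → (E2 → ℝ) → (E2 → ℝ)
  | 0, _, f => f
  | k+1, σ, f => pd2 Ω (σ 0) (iterPd2 Ω k (fun a => σ a.succ) f)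

/-! ## Christoffel symbols, curvature and associated operators in coordinates -/

/-- Christoffel symbols `Γ^k_{ij}` of a coordinate metric on `ℝ³`. -/
def Γ3 (Ω : Set E3) (G : Met3) (y : E3) (k i j : Fin 3) : ℝ :=
  (1/2) * ∑ l : Fin 3, (G y)⁻¹ k l *
    (pd3 Ω i (fun z => G z j l) y + pd3 Ω j (fun z => G z i l) y - pd3 Ω l (fun z => G z i j) y)

/-- Ricci curvature `Ric_{ij}` of a coordinate metric on `ℝ³`. -/
def Ric3 (Ω : Set E3) (G : Met3) (y : E3) (i j : Fin 3) : ℝ :=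
  (∑ k : Fin 3, pd3 Ω k (fun z => Γ3 Ω G z k i j) y)
  - (∑ k : Fin 3, pd3 Ω j (fun z => Γ3 Ω G z k i k) y)
  + ∑ k : Fin 3, ∑ l : Fin 3,
      (Γ3 Ω G y k k l * Γ3 Ω G y l i j - Γ3 Ω G y k j l * Γ3 Ω G y l i k)

/-- Ricci curvature with raised indices, `Ric^{ij} = g^{il} g^{jm} Ric_{lm}`. -/
def RicUp3 (Ω : Set E3) (G : Met3) (y : E3) (i j : Fin 3) : ℝ :=
  ∑ l : Fin 3, ∑ m : Fin 3, (G y)⁻¹ i l * (G y)⁻¹ j m * Ric3 Ω G y l m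

/-- Scalar curvature of a coordinate metric on `ℝ³`. -/
def Rscal3 (Ω : Set E3) (G : Met3) (y : E3) : ℝ :=
  ∑ i : Fin 3, ∑ j : Fin 3, (G y)⁻¹ i j * Ric3 Ω G y i j

/-- Contracted Christoffel symbols `g^{ij} Γ^k_{ij}`; these vanish iff the coordinates are
harmonic, i.e. `Δ_g x^k = 0`. -/
def contrΓ3 (Ω : Set E3) (G : Met3) (y : E3) (k : Fin 3) : ℝ :=
  ∑ i : Fin 3, ∑ j : Fin 3, (G y)⁻¹ i j * Γ3 Ω G y k i j

/-- The Laplace–Beltrami operator of a coordinate metric on `ℝ³`,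
`Δ_g u = g^{ij} ∂_i ∂_j u - g^{ij} Γ^k_{ij} ∂_k u`. -/
def lap3 (Ω : Set E3) (G : Met3) (u : E3 → ℝ) (y : E3) : ℝ :=
  (∑ i : Fin 3, ∑ j : Fin 3, (G y)⁻¹ i j * pd3 Ω i (pd3 Ω j u) y)
  - ∑ k : Fin 3, contrΓ3 Ω G y k * pd3 Ω k u y

/-- Christoffel symbols of a coordinate metric on `ℝ²`. -/
def Γ2 (Ω : Set E2) (H : Met2) (z : E2) (C A B : Fin 2) : ℝ :=
  (1/2) * ∑ D : Fin 2, (H z)⁻¹ C D *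
    (pd2 Ω A (fun w => H w B D) z + pd2 Ω B (fun w => H w A D) z - pd2 Ω D (fun w => H w A B) z)

/-- Ricci curvature of a coordinate metric on `ℝ²`. -/
def Ric2 (Ω : Set E2) (H : Met2) (z : E2) (A B : Fin 2) : ℝ :=
  (∑ C : Fin 2, pd2 Ω C (fun w => Γ2 Ω H w C A B) z)
  - (∑ C : Fin 2, pd2 Ω B (fun w => Γ2 Ω H w C A C) z)
  + ∑ C : Fin 2, ∑ D : Fin 2,
      (Γ2 Ω H z C C D * Γ2 Ω H z D A B - Γ2 Ω H z C B D * Γ2 Ω H z D A C)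

/-- Contracted Christoffel symbols on `ℝ²`. -/
def contrΓ2 (Ω : Set E2) (H : Met2) (z : E2) (C : Fin 2) : ℝ :=
  ∑ A : Fin 2, ∑ B : Fin 2, (H z)⁻¹ A B * Γ2 Ω H z C A B

/-- The Laplace–Beltrami operator of a coordinate metric on `ℝ²`. -/
def lap2 (Ω : Set E2) (H : Met2) (u : E2 → ℝ) (z : E2) : ℝ :=
  (∑ A : Fin 2, ∑ B : Fin 2, (H z)⁻¹ A B * pd2 Ω A (pd2 Ω B u) z)
  - ∑ C : Fin 2, contrΓ2 Ω H z C * pd2 Ω C u z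

/-- The Gauss curvature of a 2-dimensional coordinate metric (half its scalar curvature). -/
def K2 (Ω : Set E2) (H : Met2) (z : E2) : ℝ :=
  (1/2) * ∑ A : Fin 2, ∑ B : Fin 2, (H z)⁻¹ A B * Ric2 Ω H z A B

/-- The induced metric `g̸_{AB}` on the planes `{x³ = const}`. -/
def indMet (G : Met3) (y : E3) : Matrix (Fin 2) (Fin 2) ℝ :=
  Matrix.of fun A B => G y (emb23 A) (emb23 B)

/-- The induced boundary metric `g̸` as a 2-dimensional coordinate metric. -/
def Gb (G : Met3) : Met2 := fun z => indMet G (iota z)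

/-- The second fundamental form `Θ_{AB}` of the boundary plane `{x³ = 0}` (and of the level
sets of `x³`), with the convention `Θ(X,Y) = -g(X, ∇_Y N)`, `N` the outward unit normal
(pointing in the negative `x³`-direction). In coordinates `Θ_{AB} = -(g^{33})^{-1/2} Γ³_{AB}`. -/
def theta3 (Ω : Set E3) (G : Met3) (y : E3) (A B : Fin 2) : ℝ :=
  - (1 / Real.sqrt ((G y)⁻¹ 2 2)) * Γ3 Ω G y 2 (emb23 A) (emb23 B)

/-- Mean curvature `tr Θ` (trace with respect to the induced metric). -/
def trTheta (Ω : Set E3) (G : Met3) (y : E3) : ℝ :=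
  ∑ A : Fin 2, ∑ B : Fin 2, (indMet G y)⁻¹ A B * theta3 Ω G y A B

/-- Pointwise squared norm `|Θ|²` with respect to the induced metric. -/
def thetaSq (Ω : Set E3) (G : Met3) (y : E3) : ℝ :=
  ∑ A : Fin 2, ∑ B : Fin 2, ∑ C : Fin 2, ∑ D : Fin 2,
    (indMet G y)⁻¹ A C * (indMet G y)⁻¹ B D * theta3 Ω G y A B * theta3 Ω G y C D

/-- The action of the outward unit normal `N = -a ∇x³`, `a = (g^{33})^{-1/2}`, on functions:
`N(f) = -(g^{33})^{-1/2} g^{3k} ∂_k f`. -/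
def Nop (Ω : Set E3) (G : Met3) (f : E3 → ℝ) (y : E3) : ℝ :=
  - (1 / Real.sqrt ((G y)⁻¹ 2 2)) * ∑ k : Fin 3, (G y)⁻¹ 2 k * pd3 Ω k f y

/-- `Ric(N,N)` for the outward unit normal `N` of the level sets of `x³`. -/
def ricNN (Ω : Set E3) (G : Met3) (y : E3) : ℝ :=
  (1 / ((G y)⁻¹ 2 2)) * ∑ i : Fin 3, ∑ j : Fin 3, (G y)⁻¹ 2 i * (G y)⁻¹ 2 j * Ric3 Ω G y i j

/-! ## Boundary harmonic coordinates -/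

/-- The coordinates on `B⁺(x,r)` are *boundary harmonic* for the metric `G`:
`Δ_g x^j = 0` on `B⁺(x,r)` (for `j = 1,2,3`) and `Δ̸_g̸ x^A = 0` on `B̲⁺(x,r)` (for `A = 1,2`).
Since `Δ_g x^k = -g^{ij}Γ^k_{ij}`, this is expressed via vanishing of the contracted
Christoffel symbols. -/
def IsBdryHarmonic (x : E3) (r : ℝ) (G : Met3) : Prop :=
  (∀ y ∈ Bplus x r, ∀ k : Fin 3, contrΓ3 (Bplus x r) G y k = 0) ∧
  (∀ z ∈ bot2 x r, ∀ A : Fin 2, contrΓ2 (bot2 x r) (Gb G) z A = 0)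

/-- `G` is a smooth Riemannian metric (in coordinates) on `B⁺(x,r)`. -/
def IsRiemOnBplus (x : E3) (r : ℝ) (G : Met3) : Prop :=
  (∀ y ∈ Bplus x r, (G y).IsSymm ∧ (G y).PosDef) ∧
  ∀ i j : Fin 3, ContDiffOn ℝ (⊤ : ℕ∞) (fun y => G y i j) (Bplus x r)

/-! ## Covariant derivatives of the Ricci tensor -/

/-- Covariant derivative of a covariant `k`-tensor (in coordinates). -/
def covStep (Ω : Set E3) (G : Met3) (k : ℕ) (T : E3 → (Fin k → Fin 3) → ℝ) :
    E3 → (Fin (k+1) → Fin 3) → ℝ :=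
  fun y idx =>
    pd3 Ω (idx 0) (fun z => T z (fun a => idx a.succ)) y
    - ∑ b : Fin k, ∑ m : Fin 3,
        Γ3 Ω G y m (idx 0) (idx b.succ) * T y (Function.update (fun a => idx a.succ) b m)

/-- The iterated covariant derivatives `∇⁽ⁿ⁾Ric` (a covariant `(n+2)`-tensor). -/
def covRic (Ω : Set E3) (G : Met3) : (n : ℕ) → E3 → (Fin (n+2) → Fin 3) → ℝ
  | 0 => fun y idx => Ric3 Ω G y (idx 0) (idx 1)
  | n+1 => covStep Ω G (n+2) (covRic Ω G n)

/-- Pointwise squared norm of a covariant `k`-tensor with respect to `G`. -/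
def tensNormSq (G : Met3) (k : ℕ) (T : E3 → (Fin k → Fin 3) → ℝ) (y : E3) : ℝ :=
  ∑ idx : Fin k → Fin 3, ∑ idx' : Fin k → Fin 3,
    (∏ a : Fin k, (G y)⁻¹ (idx a) (idx' a)) * T y idx * T y idx'

/-- `‖∇⁽ⁿ⁾Ric‖_{L²(B⁺(x,r))}` (with respect to the Riemannian measure `√det g dy`). -/
def covRicL2 (x : E3) (r : ℝ) (G : Met3) (n : ℕ) : ℝ≥0∞ :=
  (∫⁻ y in Bplus x r,
    ENNReal.ofReal (tensNormSq G (n+2) (covRic (Bplus x r) G n) y * Real.sqrt |(G y).det|))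
  ^ (1/2 : ℝ)

/-- `‖Ric‖_{L²(B⁺(x,r))}`. -/
def ricL2 (x : E3) (r : ℝ) (G : Met3) : ℝ≥0∞ := covRicL2 x r G 0

/-- `‖Θ‖_{L⁴(B̲⁺(x,r))}`. -/
def thetaL4 (x : E3) (r : ℝ) (G : Met3) : ℝ≥0∞ :=
  (∫⁻ z in bot2 x r,
    ENNReal.ofReal ((thetaSq (Bplus x r) G (iota z))^2 * Real.sqrt |(Gb G z).det|))
  ^ (1/4 : ℝ)

/-! ## Sobolev norms (integer, fractional and negative order) -/

/-- `Σ_{k ≤ m} ∫_Ω ‖D^k f‖^p` on `ℝ³`. -/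
def lpPow3 (p : ℝ) (m : ℕ) (Ω : Set E3) (f : E3 → ℝ) : ℝ≥0∞ :=
  ∑ k ∈ Finset.range (m+1), ∫⁻ y in Ω, ENNReal.ofReal (‖iteratedFDerivWithin ℝ k f Ω y‖ ^ p)

/-- The `W^{m,p}(Ω)` norm for integer `m`, on `ℝ³`. -/
def wNormNat3 (p : ℝ) (m : ℕ) (Ω : Set E3) (f : E3 → ℝ) : ℝ≥0∞ := (lpPow3 p m Ω f) ^ (1/p)

/-- The Gagliardo (Sobolev–Slobodeckij) double integral for the `m`-th derivatives, on `ℝ³`. -/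
def gaglPow3 (p θ : ℝ) (m : ℕ) (Ω : Set E3) (f : E3 → ℝ) : ℝ≥0∞ :=
  ∫⁻ y in Ω, ∫⁻ z in Ω, ENNReal.ofReal
    (‖iteratedFDerivWithin ℝ m f Ω y - iteratedFDerivWithin ℝ m f Ω z‖ ^ p
      / ‖y - z‖ ^ (3 + θ * p))

/-- The `W^{s,p}(Ω)` norm for `s ≥ 0`, on `ℝ³`. -/
def wNormPos3 (p s : ℝ) (Ω : Set E3) (f : E3 → ℝ) : ℝ≥0∞ :=
  if s = (⌊s⌋₊ : ℝ) then wNormNat3 p ⌊s⌋₊ Ω f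
  else (lpPow3 p ⌊s⌋₊ Ω f + gaglPow3 p (s - ⌊s⌋₊) ⌊s⌋₊ Ω f) ^ (1/p)

/-- The `W^{s,p}(Ω)` norm for arbitrary `s ∈ ℝ` on `ℝ³`; for `s < 0` it is defined by duality
against smooth compactly supported test functions. -/
def wNorm3 (p s : ℝ) (Ω : Set E3) (f : E3 → ℝ) : ℝ≥0∞ :=
  if 0 ≤ s then wNormPos3 p s Ω f
  else sSup {c : ℝ≥0∞ | ∃ φ : E3 → ℝ, ContDiff ℝ (⊤ : ℕ∞) φ ∧ HasCompactSupport φ ∧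
    tsupport φ ⊆ Ω ∧ wNormPos3 (p/(p-1)) (-s) Ω φ ≤ 1 ∧
    c = ENNReal.ofReal |∫ y in Ω, f y * φ y|}

/-- The `L^p(Ω)` norm on `ℝ³`. -/
def lpNorm3 (p : ℝ) (Ω : Set E3) (f : E3 → ℝ) : ℝ≥0∞ :=
  (∫⁻ y in Ω, ENNReal.ofReal (|f y| ^ p)) ^ (1/p)

/-- Same definitions on `ℝ²` (with the dimension `2` in the Gagliardo exponent). -/
def lpPow2 (p : ℝ) (m : ℕ) (Ω : Set E2) (f : E2 → ℝ) : ℝ≥0∞ :=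
  ∑ k ∈ Finset.range (m+1), ∫⁻ z in Ω, ENNReal.ofReal (‖iteratedFDerivWithin ℝ k f Ω z‖ ^ p)

def wNormNat2 (p : ℝ) (m : ℕ) (Ω : Set E2) (f : E2 → ℝ) : ℝ≥0∞ := (lpPow2 p m Ω f) ^ (1/p)

def gaglPow2 (p θ : ℝ) (m : ℕ) (Ω : Set E2) (f : E2 → ℝ) : ℝ≥0∞ :=
  ∫⁻ y in Ω, ∫⁻ z in Ω, ENNReal.ofReal
    (‖iteratedFDerivWithin ℝ m f Ω y - iteratedFDerivWithin ℝ m f Ω z‖ ^ p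
      / ‖y - z‖ ^ (2 + θ * p))

def wNormPos2 (p s : ℝ) (Ω : Set E2) (f : E2 → ℝ) : ℝ≥0∞ :=
  if s = (⌊s⌋₊ : ℝ) then wNormNat2 p ⌊s⌋₊ Ω f
  else (lpPow2 p ⌊s⌋₊ Ω f + gaglPow2 p (s - ⌊s⌋₊) ⌊s⌋₊ Ω f) ^ (1/p)

def wNorm2 (p s : ℝ) (Ω : Set E2) (f : E2 → ℝ) : ℝ≥0∞ :=
  if 0 ≤ s then wNormPos2 p s Ω f
  else sSup {c : ℝ≥0∞ | ∃ φ : E2 → ℝ, ContDiff ℝ (⊤ : ℕ∞) φ ∧ HasCompactSupport φ ∧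
    tsupport φ ⊆ Ω ∧ wNormPos2 (p/(p-1)) (-s) Ω φ ≤ 1 ∧
    c = ENNReal.ofReal |∫ z in Ω, f z * φ z|}

def lpNorm2 (p : ℝ) (Ω : Set E2) (f : E2 → ℝ) : ℝ≥0∞ :=
  (∫⁻ z in Ω, ENNReal.ofReal (|f z| ^ p)) ^ (1/p)

/-- The `W^{s,p}(∂Ω)` norm of a boundary function, defined through the trace
characterization: the infimum of the `W^{s+1/p,p}(Ω)` norms of all extensions. -/
def bdryNorm3 (p s : ℝ) (Ω : Set E3) (h : E3 → ℝ) : ℝ≥0∞ :=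
  ⨅ (H : E3 → ℝ) (_ : Set.EqOn H h (frontier Ω)), wNorm3 p (s + 1/p) Ω H

/-- Hölder seminorm (valued in `ℝ≥0∞`) of a (vector valued) function on a subset of `ℝ³`. -/
def holderE {F : Type} [NormedAddCommGroup F] (α : ℝ) (S : Set E3) (f : E3 → F) : ℝ≥0∞ :=
  ⨆ y ∈ S, ⨆ z ∈ S, ENNReal.ofReal (‖f y - f z‖ / ‖y - z‖ ^ α)

/-- The `C^{m,β}` norm of a function on a subset of `ℝ³`. -/
def cNormHolder3 (m : ℕ) (β : ℝ) (S : Set E3) (f : E3 → ℝ) : ℝ≥0∞ :=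
  (∑ k ∈ Finset.range (m+1), ⨆ y ∈ S, ENNReal.ofReal ‖iteratedFDerivWithin ℝ k f S y‖)
  + holderE β S (fun y => iteratedFDerivWithin ℝ m f S y)

/-! ## Smooth domains and Riemannian metrics on them -/

/-- A *smooth domain*: a connected open set whose closure has smooth boundary
(defined locally by regular smooth level-set functions). -/
def SmoothDomain {E : Type} [NormedAddCommGroup E] [NormedSpace ℝ E] (Ω : Set E) : Prop :=
  IsOpen Ω ∧ IsConnected Ω ∧
  ∀ y ∈ frontier Ω, ∃ (V : Set E) (f : E → ℝ), IsOpen V ∧ y ∈ V ∧ ContDiff ℝ (⊤ : ℕ∞) f ∧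
    (∀ z ∈ V, fderiv ℝ f z ≠ 0) ∧ V ∩ closure Ω = V ∩ {z | f z ≤ 0}

def IsMetricOn3 (Ω : Set E3) (G : Met3) : Prop :=
  ∀ y ∈ Ω, (G y).IsSymm ∧ (G y).PosDef

def SmoothMetricOn3 (Ω : Set E3) (G : Met3) : Prop :=
  IsMetricOn3 Ω G ∧ ∀ i j : Fin 3, ContDiffOn ℝ (⊤ : ℕ∞) (fun y => G y i j) Ω

def UnifPosDef3 (Ω : Set E3) (G : Met3) : Prop :=
  ∃ c : ℝ, 0 < c ∧ ∀ y ∈ Ω, ∀ ξ : Fin 3 → ℝ,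
    c * ∑ i : Fin 3, (ξ i)^2 ≤ ∑ i : Fin 3, ∑ j : Fin 3, G y i j * ξ i * ξ j

def IsMetricOn2 (Ω : Set E2) (H : Met2) : Prop :=
  ∀ z ∈ Ω, (H z).IsSymm ∧ (H z).PosDef

def SmoothMetricOn2 (Ω : Set E2) (H : Met2) : Prop :=
  IsMetricOn2 Ω H ∧ ∀ A B : Fin 2, ContDiffOn ℝ (⊤ : ℕ∞) (fun z => H z A B) Ω

def UnifPosDef2 (Ω : Set E2) (H : Met2) : Prop :=
  ∃ c : ℝ, 0 < c ∧ ∀ z ∈ Ω, ∀ ξ : Fin 2 → ℝ,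
    c * ∑ A : Fin 2, (ξ A)^2 ≤ ∑ A : Fin 2, ∑ B : Fin 2, H z A B * ξ A * ξ B

/-- Weak convergence in `H^s(Ω)` (`Ω ⊆ ℝ²`): boundedness in norm plus distributional
convergence. -/
def WeakConv2 (s : ℝ) (Ω : Set E2) (Fn : ℕ → E2 → ℝ) (F : E2 → ℝ) : Prop :=
  (∃ C : ℝ≥0∞, C < ⊤ ∧ ∀ n, wNorm2 2 s Ω (Fn n) ≤ C) ∧
  ∀ φ : E2 → ℝ, ContDiff ℝ (⊤ : ℕ∞) φ → HasCompactSupport φ → tsupport φ ⊆ Ω →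
    Filter.Tendsto (fun n => ∫ z in Ω, (Fn n z - F z) * φ z) Filter.atTop (nhds 0)

/-- Weak convergence in `H^s(Ω)` (`Ω ⊆ ℝ³`). -/
def WeakConv3 (s : ℝ) (Ω : Set E3) (Fn : ℕ → E3 → ℝ) (F : E3 → ℝ) : Prop :=
  (∃ C : ℝ≥0∞, C < ⊤ ∧ ∀ n, wNorm3 2 s Ω (Fn n) ≤ C) ∧
  ∀ φ : E3 → ℝ, ContDiff ℝ (⊤ : ℕ∞) φ → HasCompactSupport φ → tsupport φ ⊆ Ω →
    Filter.Tendsto (fun n => ∫ y in Ω, (Fn n y - F y) * φ y) Filter.atTop (nhds 0)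

/-- `‖g - e‖_{H²(Ω)}` for a 3-dimensional coordinate metric (sum over components). -/
def metH2dev3 (Ω : Set E3) (G : Met3) : ℝ≥0∞ :=
  ∑ i : Fin 3, ∑ j : Fin 3,
    wNormNat3 2 2 Ω (fun y => G y i j - (1 : Matrix (Fin 3) (Fin 3) ℝ) i j)

/-- `‖g̸ - e‖_{H^{3/2}(Ω)}` for a 2-dimensional coordinate metric. -/
def metH32dev2 (Ω : Set E2) (H : Met2) : ℝ≥0∞ :=
  ∑ A : Fin 2, ∑ B : Fin 2,
    wNorm2 2 (3/2) Ω (fun z => H z A B - (1 : Matrix (Fin 2) (Fin 2) ℝ) A B)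

/-! ## The quadratic nonlinearities `Q` of boundary harmonic coordinates -/

/-- `Q_{ij}(g,∂g) = -g(∇g_{ik}, ∇g^{kl}) g_{lj} + g(Hess x^k, Hess x^l) g_{ik} g_{lj}`,
where `g(∇u,∇v) = g^{ab} ∂_a u ∂_b v` and `(Hess x^k)_{ab} = -Γ^k_{ab}`. -/
def Qlow3 (Ω : Set E3) (G : Met3) (y : E3) (i j : Fin 3) : ℝ :=
  - (∑ k : Fin 3, ∑ l : Fin 3,
      (∑ a : Fin 3, ∑ b : Fin 3,
        (G y)⁻¹ a b * pd3 Ω a (fun z => G z i k) y * pd3 Ω b (fun z => (G z)⁻¹ k l) y)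
      * G y l j)
  + ∑ k : Fin 3, ∑ l : Fin 3,
      (∑ a : Fin 3, ∑ b : Fin 3, ∑ c : Fin 3, ∑ d : Fin 3,
        (G y)⁻¹ a c * (G y)⁻¹ b d * Γ3 Ω G y k a b * Γ3 Ω G y l c d)
      * G y i k * G y l j

/-- `Q^{ij} = g(Hess x^i, Hess x^j)`. -/
def Qup3 (Ω : Set E3) (G : Met3) (y : E3) (i j : Fin 3) : ℝ :=
  ∑ a : Fin 3, ∑ b : Fin 3, ∑ c : Fin 3, ∑ d : Fin 3,
    (G y)⁻¹ a c * (G y)⁻¹ b d * Γ3 Ω G y i a b * Γ3 Ω G y j c d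

/-- The 2-dimensional analogue `Q̸_{AB}(g̸, ∂̸g̸)`. -/
def Qlow2 (Ω : Set E2) (H : Met2) (z : E2) (A B : Fin 2) : ℝ :=
  - (∑ C : Fin 2, ∑ D : Fin 2,
      (∑ a : Fin 2, ∑ b : Fin 2,
        (H z)⁻¹ a b * pd2 Ω a (fun w => H w A C) z * pd2 Ω b (fun w => (H w)⁻¹ C D) z)
      * H z D B)
  + ∑ C : Fin 2, ∑ D : Fin 2,
      (∑ a : Fin 2, ∑ b : Fin 2, ∑ c : Fin 2, ∑ d : Fin 2,
        (H z)⁻¹ a c * (H z)⁻¹ b d * Γ2 Ω H z C a b * Γ2 Ω H z D c d)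
      * H z A C * H z D B

/-! ## Riemannian 3-manifolds with boundary, presented by half-ball coordinate atlases -/

/-- A coordinate chart of a 3-manifold with boundary: a map `φ : B⁺(x,r) → U ⊆ M` together
with the coordinate components `G` of the Riemannian metric in this chart. -/
structure MChart (M : Type) where
  ctr : E3
  rad : ℝ
  map : E3 → M
  dom : Set M
  G : Met3

namespace MChart
end MChart

/-- The inverse (coordinate) map of a chart. -/
def chartInv {M : Type} (c : MChart M) : M → E3 :=
  Function.invFunOn c.map (Bplus c.ctr c.rad)

/-- The part of `B⁺(x,r)` on which the transition to another chart is defined. -/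
def overlapSet {M : Type} (c c' : MChart M) : Set E3 :=
  {y | y ∈ Bplus c.ctr c.rad ∧ c.map y ∈ c'.dom}

/-- The transition map between two charts. -/
def transMap {M : Type} (c c' : MChart M) : E3 → E3 := fun y => chartInv c' (c.map y)

/-- Basic requirements on a chart: positive radius, center in `ℍ⁺`, homeomorphism onto an
open set `U`, the flat face `{x³ = 0}` corresponds exactly to the boundary of `M`, and the
metric components are symmetric and positive definite. -/
def ChartGood {M : Type} [TopologicalSpace M] (bdry : Set M) (c : MChart M) : Prop :=
  0 < c.rad ∧ 0 ≤ c.ctr 2 ∧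
  c.dom = c.map '' (Bplus c.ctr c.rad) ∧ IsOpen c.dom ∧
  Set.InjOn c.map (Bplus c.ctr c.rad) ∧ ContinuousOn c.map (Bplus c.ctr c.rad) ∧
  ContinuousOn (chartInv c) c.dom ∧
  (∀ y ∈ Bplus c.ctr c.rad, (y 2 = 0 ↔ c.map y ∈ bdry)) ∧
  (∀ y ∈ Bplus c.ctr c.rad, (c.G y).IsSymm ∧ (c.G y).PosDef)

/-- Compatibility of two charts with regularity `n`: the transition map is `C^n` on the
overlap, and the metric components of one chart are the pullback of those of the other. -/
def ChartTransC {M : Type} (n : ℕ∞) (c c' : MChart M) : Prop :=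
  (∀ a : Fin 3, ContDiffOn ℝ n (fun y => transMap c c' y a) (overlapSet c c')) ∧
  (∀ y ∈ overlapSet c c', ∀ i j : Fin 3,
    c.G y i j = ∑ a : Fin 3, ∑ b : Fin 3,
      fderivWithin ℝ (transMap c c') (overlapSet c c') y (e3 i) a *
      c'.G (transMap c c' y) a b *
      fderivWithin ℝ (transMap c c') (overlapSet c c') y (e3 j) b)

/-- A smooth Riemannian 3-manifold with boundary, presented by an atlas of half-ball charts
carrying the coordinate components of the Riemannian metric. -/
structure RiemannMfdBdry3 (M : Type) [TopologicalSpace M] : Type where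
  atlas : Set (MChart M)
  bdry : Set M
  good : ∀ c ∈ atlas, ChartGood bdry c
  compat : ∀ c ∈ atlas, ∀ c' ∈ atlas, ChartTransC (⊤ : ℕ∞) c c'
  cover : ∀ p : M, ∃ c ∈ atlas, p ∈ c.dom
  smooth : ∀ c ∈ atlas, ∀ i j : Fin 3,
    ContDiffOn ℝ (⊤ : ℕ∞) (fun y => c.G y i j) (Bplus c.ctr c.rad)

/-- A further chart (of regularity `n`) compatible with the smooth structure `R`. -/
def IsChartOfC {M : Type} [TopologicalSpace M] (R : RiemannMfdBdry3 M) (n : ℕ∞)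
    (c : MChart M) : Prop :=
  ChartGood R.bdry c ∧ ∀ c' ∈ R.atlas, ChartTransC n c c' ∧ ChartTransC n c' c

/-- An `H³`-regular chart compatible with `R`. -/
def H3ChartOf {M : Type} [TopologicalSpace M] (R : RiemannMfdBdry3 M) (c : MChart M) : Prop :=
  IsChartOfC R 1 c ∧ ∀ c' ∈ R.atlas, ∀ a : Fin 3,
    wNormNat3 2 3 (overlapSet c c') (fun y => transMap c c' y a) < ⊤ ∧
    wNormNat3 2 3 (overlapSet c' c) (fun y => transMap c' c y a) < ⊤

/-- A `C^{m+1,α}`-regular chart compatible with `R`. -/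
def CmaChartReg {M : Type} [TopologicalSpace M] (R : RiemannMfdBdry3 M) (m : ℕ) (α : ℝ)
    (c : MChart M) : Prop :=
  IsChartOfC R (m+1 : ℕ) c ∧ ∀ c' ∈ R.atlas, ∀ a : Fin 3,
    holderE α (overlapSet c c')
      (fun y => iteratedFDerivWithin ℝ (m+1) (fun z => transMap c c' z a) (overlapSet c c') y)
      < ⊤ ∧
    holderE α (overlapSet c' c)
      (fun y => iteratedFDerivWithin ℝ (m+1) (fun z => transMap c' c z a) (overlapSet c' c) y)
      < ⊤

open Classical in
/-- The `g`-speed of a path `γ` at time `t`, computed in any atlas chart around `γ t`. -/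
def speedAt {M : Type} [TopologicalSpace M] (R : RiemannMfdBdry3 M) (γ : ℝ → M) (t : ℝ) : ℝ :=
  if h : ∃ c ∈ R.atlas, γ t ∈ c.dom then
    Real.sqrt (∑ i : Fin 3, ∑ j : Fin 3,
      (deriv (fun s => chartInv h.choose (γ s)) t) i *
      h.choose.G (chartInv h.choose (γ t)) i j *
      (deriv (fun s => chartInv h.choose (γ s)) t) j)
  else 0

/-- The geodesic (Riemannian) distance: the infimum of the lengths of paths joining two
points. -/
def geodDist {M : Type} [TopologicalSpace M] (R : RiemannMfdBdry3 M) (p q : M) : ℝ :=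
  sInf {L | ∃ γ : ℝ → M, Continuous γ ∧ γ 0 = p ∧ γ 1 = q ∧
    L = ∫ t in (0:ℝ)..1, speedAt R γ t}

/-- The geodesic ball `B_g(p,ρ)`. -/
def Bgeo {M : Type} [TopologicalSpace M] (R : RiemannMfdBdry3 M) (p : M) (ρ : ℝ) : Set M :=
  {q | geodDist R p q < ρ}

/-- Completeness of `(M,g)` as a metric space (with the geodesic distance). -/
def GComplete {M : Type} [TopologicalSpace M] (R : RiemannMfdBdry3 M) : Prop :=
  ∀ u : ℕ → M,
    (∀ ε : ℝ, 0 < ε → ∃ N : ℕ, ∀ m ≥ N, ∀ n ≥ N, geodDist R (u m) (u n) < ε) →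
    ∃ p : M, Filter.Tendsto u Filter.atTop (nhds p)

/-- The integral `∫_A f dvol_g`, defined through countable chart covers (infimum over all
covers of the sum of the chart-wise coordinate integrals against `√det g`). -/
def intOn {M : Type} [TopologicalSpace M] (R : RiemannMfdBdry3 M) (A : Set M)
    (f : M → ℝ) : ℝ≥0∞ :=
  ⨅ (c : ℕ → MChart M) (S : ℕ → Set M)
    (_ : (∀ n, c n ∈ R.atlas ∧ S n ⊆ (c n).dom) ∧ A ⊆ ⋃ n, S n),
    ∑' n, ∫⁻ y in {y | y ∈ Bplus (c n).ctr (c n).rad ∧ (c n).map y ∈ S n ∩ A},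
      ENNReal.ofReal (f ((c n).map y) * Real.sqrt |((c n).G y).det|)

/-- The boundary integral `∫_{∂M} f dvol_{g̸}`, defined through countable chart covers. -/
def intBdry {M : Type} [TopologicalSpace M] (R : RiemannMfdBdry3 M) (f : M → ℝ) : ℝ≥0∞ :=
  ⨅ (c : ℕ → MChart M) (S : ℕ → Set M)
    (_ : (∀ n, c n ∈ R.atlas ∧ S n ⊆ (c n).dom) ∧ R.bdry ⊆ ⋃ n, S n),
    ∑' n, ∫⁻ z in {z : E2 | iota z ∈ Bplus (c n).ctr (c n).rad ∧
        (c n).map (iota z) ∈ S n ∩ R.bdry},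
      ENNReal.ofReal (f ((c n).map (iota z)) * Real.sqrt |(indMet (c n).G (iota z)).det|)

/-- The Riemannian volume of `A ⊆ M`. -/
def volM {M : Type} [TopologicalSpace M] (R : RiemannMfdBdry3 M) (A : Set M) : ℝ≥0∞ :=
  intOn R A (fun _ => 1)

/-- The volume radius of `(M,g)` at scale `1`:
`inf_{p ∈ M} inf_{ρ < 1} vol(B_g(p,ρ)) / ((4π/3) ρ³)`. -/
def rvol1 {M : Type} [TopologicalSpace M] (R : RiemannMfdBdry3 M) : ℝ :=
  sInf {v : ℝ | ∃ (p : M) (ρ : ℝ), 0 < ρ ∧ ρ < 1 ∧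
    v = (volM R (Bgeo R p ρ)).toReal / ((4 * Real.pi / 3) * ρ^3)}

/-- A chosen atlas chart around a point. -/
def chartAtP {M : Type} [TopologicalSpace M] (R : RiemannMfdBdry3 M) (p : M) : MChart M :=
  (R.cover p).choose

/-- The pointwise squared norm `|∇⁽ⁿ⁾Ric|²_g` at `p ∈ M`, computed in a chart around `p`. -/
def covRicSqAt {M : Type} [TopologicalSpace M] (R : RiemannMfdBdry3 M) (n : ℕ) (p : M) : ℝ :=
  tensNormSq (chartAtP R p).G (n+2)
    (covRic (Bplus (chartAtP R p).ctr (chartAtP R p).rad) (chartAtP R p).G n)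
    (chartInv (chartAtP R p) p)

/-- `‖∇⁽ⁿ⁾Ric‖_{L²(M)}`. -/
def covRicL2M {M : Type} [TopologicalSpace M] (R : RiemannMfdBdry3 M) (n : ℕ) : ℝ≥0∞ :=
  (intOn R Set.univ (covRicSqAt R n)) ^ (1/2 : ℝ)

/-- `‖Ric‖_{L²(M)}`. -/
def ricL2M {M : Type} [TopologicalSpace M] (R : RiemannMfdBdry3 M) : ℝ≥0∞ := covRicL2M R 0

/-- The pointwise squared norm `|Θ|²` of the second fundamental form at a boundary point. -/
def thetaSqAt {M : Type} [TopologicalSpace M] (R : RiemannMfdBdry3 M) (p : M) : ℝ :=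
  thetaSq (Bplus (chartAtP R p).ctr (chartAtP R p).rad) (chartAtP R p).G
    (chartInv (chartAtP R p) p)

/-- `‖Θ‖_{L⁴(∂M)}`. -/
def thetaL4M {M : Type} [TopologicalSpace M] (R : RiemannMfdBdry3 M) : ℝ≥0∞ :=
  (intBdry R (fun p => (thetaSqAt R p)^2)) ^ (1/4 : ℝ)

/-! ## Chart-wise metric bounds and the manifold norms -/

/-- The condition `a·e ≤ g ≤ b·e` (as quadratic forms) on `B⁺(x,r)`. -/
def MetricPinch (x : E3) (r : ℝ) (G : Met3) (a b : ℝ) : Prop :=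
  ∀ y ∈ Bplus x r, ∀ ξ : Fin 3 → ℝ,
    a * ∑ i : Fin 3, (ξ i)^2 ≤ (∑ i : Fin 3, ∑ j : Fin 3, G y i j * ξ i * ξ j) ∧
    (∑ i : Fin 3, ∑ j : Fin 3, G y i j * ξ i * ξ j) ≤ b * ∑ i : Fin 3, (ξ i)^2

/-- `‖∂g‖_{L²(B⁺(x,r))}` over all first coordinate derivatives of all components. -/
def d1Norm (x : E3) (r : ℝ) (G : Met3) : ℝ≥0∞ :=
  (∫⁻ y in Bplus x r, ENNReal.ofReal (∑ k : Fin 3, ∑ i : Fin 3, ∑ j : Fin 3,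
    (pd3 (Bplus x r) k (fun z => G z i j) y)^2)) ^ (1/2 : ℝ)

/-- `‖∂²g‖_{L²(B⁺(x,r))}` over all second coordinate derivatives of all components. -/
def d2Norm (x : E3) (r : ℝ) (G : Met3) : ℝ≥0∞ :=
  (∫⁻ y in Bplus x r, ENNReal.ofReal
    (∑ k : Fin 3, ∑ l : Fin 3, ∑ i : Fin 3, ∑ j : Fin 3,
      (pd3 (Bplus x r) k (pd3 (Bplus x r) l (fun z => G z i j)) y)^2)) ^ (1/2 : ℝ)

/-- Condition (h2): for all multi-indices `I` with `1 ≤ |I| ≤ 2`,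
`r^{|I|-3/2} ‖∂^I g_{ij}‖_{L²(B⁺(x,r))} ≤ Q`. -/
def H2CondLe (x : E3) (r : ℝ) (G : Met3) (Q : ℝ) : Prop :=
  (∀ (k i j : Fin 3),
    (ENNReal.ofReal r) ^ (-(1/2) : ℝ) *
      (∫⁻ y in Bplus x r,
        ENNReal.ofReal ((pd3 (Bplus x r) k (fun z => G z i j) y)^2)) ^ (1/2 : ℝ)
      ≤ ENNReal.ofReal Q) ∧
  (∀ (k l i j : Fin 3),
    (ENNReal.ofReal r) ^ ((1/2) : ℝ) *
      (∫⁻ y in Bplus x r,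
        ENNReal.ofReal
          ((pd3 (Bplus x r) k (pd3 (Bplus x r) l (fun z => G z i j)) y)^2)) ^ (1/2 : ℝ)
      ≤ ENNReal.ofReal Q)

/-- The chart-wise condition realizing `‖(M,g,p)‖^{b.h.}_{H²,r} ≤ Q`: an `H³`-regular
boundary harmonic chart `φ : B⁺(x,r) → U` with `φ(x) = p` satisfying (h1) and (h2). -/
def BHChartLe {M : Type} [TopologicalSpace M] (R : RiemannMfdBdry3 M) (p : M) (r Q : ℝ)
    (c : MChart M) : Prop :=
  H3ChartOf R c ∧ c.rad = r ∧ c.map c.ctr = p ∧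
  MetricPinch c.ctr r c.G (Real.exp (-(2*Q))) (Real.exp (2*Q)) ∧
  H2CondLe c.ctr r c.G Q ∧
  IsBdryHarmonic c.ctr r c.G

/-- `‖(M,g,p)‖^{b.h.}_{H²,r} ≤ Q`. -/
def BHNormLe {M : Type} [TopologicalSpace M] (R : RiemannMfdBdry3 M) (p : M)
    (r Q : ℝ) : Prop :=
  ∃ c : MChart M, BHChartLe R p r Q c

/-- The boundary harmonic `H²`-norm `‖(M,g,p)‖^{b.h.}_{H²,r}` (`∞` if no chart exists). -/
def bhNormPt {M : Type} [TopologicalSpace M] (R : RiemannMfdBdry3 M) (p : M) (r : ℝ) :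
    ℝ≥0∞ :=
  ⨅ (Q : ℝ≥0) (_ : BHNormLe R p r (Q : ℝ)), (Q : ℝ≥0∞)

/-- `‖(M,g)‖^{b.h.}_{H²,r} = sup_{p ∈ M} ‖(M,g,p)‖^{b.h.}_{H²,r}`. -/
def bhNorm {M : Type} [TopologicalSpace M] (R : RiemannMfdBdry3 M) (r : ℝ) : ℝ≥0∞ :=
  ⨆ p : M, bhNormPt R p r

/-- Condition (n2): for all multi-indices `I` with `0 ≤ |I| ≤ m`,
`r^{|I|+α} [∂^I g_{ij}]_{C^{0,α}(B⁺(x,r))} ≤ Q`. -/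
def CmaCondLe (m : ℕ) (α : ℝ) (x : E3) (r : ℝ) (G : Met3) (Q : ℝ) : Prop :=
  ∀ k : ℕ, k ≤ m → ∀ σ : Fin k → Fin 3, ∀ i j : Fin 3,
    ENNReal.ofReal (r ^ ((k : ℝ) + α)) *
      holderE α (Bplus x r) (iterPd3 (Bplus x r) k σ (fun z => G z i j))
    ≤ ENNReal.ofReal Q

/-- The chart-wise condition realizing `‖(M,g,p)‖_{C^{m,α},r} ≤ Q`. -/
def CmaChartLe {M : Type} [TopologicalSpace M] (R : RiemannMfdBdry3 M) (p : M) (m : ℕ)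
    (α r Q : ℝ) (c : MChart M) : Prop :=
  CmaChartReg R m α c ∧ c.rad = r ∧ c.map c.ctr = p ∧
  MetricPinch c.ctr r c.G (Real.exp (-(2*Q))) (Real.exp (2*Q)) ∧
  CmaCondLe m α c.ctr r c.G Q

/-- `‖(M,g,p)‖_{C^{m,α},r} ≤ Q`. -/
def CmaNormLe {M : Type} [TopologicalSpace M] (R : RiemannMfdBdry3 M) (p : M) (m : ℕ)
    (α r Q : ℝ) : Prop :=
  ∃ c : MChart M, CmaChartLe R p m α r Q c

/-- The norm `‖(M,g,p)‖_{C^{m,α},r}` (`∞` if no chart exists). -/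
def cmaNormPt {M : Type} [TopologicalSpace M] (R : RiemannMfdBdry3 M) (p : M) (m : ℕ)
    (α r : ℝ) : ℝ≥0∞ :=
  ⨅ (Q : ℝ≥0) (_ : CmaNormLe R p m α r (Q : ℝ)), (Q : ℝ≥0∞)

/-- `‖(M,g)‖_{C^{m,α},r} = sup_{p ∈ M} ‖(M,g,p)‖_{C^{m,α},r}`. -/
def cmaNorm {M : Type} [TopologicalSpace M] (R : RiemannMfdBdry3 M) (m : ℕ)
    (α r : ℝ) : ℝ≥0∞ :=
  ⨆ p : M, cmaNormPt R p m α r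

/-! ## Rescaling -/

/-- The chart of the rescaled manifold `(M, λ²g)` obtained from a chart of `(M,g)` by the
coordinate scaling `x ↦ λx` (so that the metric components satisfy `G'(y) = G(λ⁻¹y)`). -/
def MChart.scaleC {M : Type} (l : ℝ) (c : MChart M) : MChart M :=
  ⟨l • c.ctr, l * c.rad, fun y => c.map (l⁻¹ • y), c.dom, fun y => c.G (l⁻¹ • y)⟩

/-- `R'` is the presentation of the rescaled manifold `(M, λ²g)` (with charts rescaled by
`λ`), where `R` presents `(M,g)`. -/
def IsScalingOf {M : Type} [TopologicalSpace M] (l : ℝ) (R R' : RiemannMfdBdry3 M) : Prop :=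
  R'.bdry = R.bdry ∧ R'.atlas = (MChart.scaleC l) '' R.atlas

/-! ## Pointed manifolds and pointed convergence -/

/-- A pointed (smooth) Riemannian 3-manifold with boundary. -/
structure PointedRM3 : Type 1 where
  (carrier : Type)
  [topo : TopologicalSpace carrier]
  (str : RiemannMfdBdry3 carrier)
  (pt : carrier)

attribute [instance] PointedRM3.topo

open Classical in
/-- The components of the pullback `F*g'` of the metric of `(M',g')` under `F : M → M'`,
computed in a chart `c` of `M` (and some chart of `M'` around the image point). -/
def pullG {M M' : Type} [TopologicalSpace M'] (R' : RiemannMfdBdry3 M') (F : M → M')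
    (c : MChart M) (y : E3) (i j : Fin 3) : ℝ :=
  if h : ∃ c' ∈ R'.atlas, F (c.map y) ∈ c'.dom then
    ∑ a : Fin 3, ∑ b : Fin 3,
      fderiv ℝ (fun z => chartInv h.choose (F (c.map z))) y (e3 i) a *
      h.choose.G (chartInv h.choose (F (c.map y))) a b *
      fderiv ℝ (fun z => chartInv h.choose (F (c.map z))) y (e3 j) b
  else 0

/-- Pointed convergence of a sequence of pointed Riemannian manifolds with boundary,
in the topology measured by a chart-wise norm `normF` (e.g. `C^{m,β}` or `H²`):
for every `Rad > 0` there is a bounded set `Ω ⊇ B_g(p,Rad)` and embeddings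
`F_i : Ω → M_i` for large `i` with `F_i(p) = p_i`, `B_{g_i}(p_i,Rad) ⊆ F_i(Ω)` and
`(F_i)*g_i → g` on `Ω` in the given norm. -/
def PointedConvN (normF : Set E3 → (E3 → ℝ) → ℝ≥0∞) (Xi : ℕ → PointedRM3)
    (X : PointedRM3) : Prop :=
  ∀ Rad : ℝ, 0 < Rad →
  ∃ (Ω : Set X.carrier) (K : ℝ) (N : ℕ) (F : ∀ i, X.carrier → (Xi i).carrier),
    Ω ⊆ Bgeo X.str X.pt K ∧ Bgeo X.str X.pt Rad ⊆ Ω ∧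
    (∀ i, N ≤ i → Set.InjOn (F i) Ω ∧ ContinuousOn (F i) Ω ∧ F i X.pt = (Xi i).pt ∧
      Bgeo (Xi i).str (Xi i).pt Rad ⊆ F i '' Ω) ∧
    (∀ c ∈ X.str.atlas, ∀ i j : Fin 3,
      Filter.Tendsto
        (fun n => normF {y | y ∈ Bplus c.ctr c.rad ∧ c.map y ∈ Ω}
          (fun y => pullG (Xi n).str (F n) c y i j - c.G y i j))
        Filter.atTop (nhds 0))

/-- The chart-wise `H²` norm used for pointed `H²`-convergence. -/
def h2NormOn : Set E3 → (E3 → ℝ) → ℝ≥0∞ := fun S f => wNormNat3 2 2 S f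

/-! ## Outward unit normals of smooth domains -/

/-- `v` is tangent to `S` at `y`: it is the velocity of a curve in `S` through `y`. -/
def TangentTo (S : Set E3) (y v : E3) : Prop :=
  ∃ γ : ℝ → E3, γ 0 = y ∧ (∀ t, γ t ∈ S) ∧ HasDerivAt γ v 0

/-- `nvec` is the outward-pointing `g`-unit normal vector field along `∂Ω`. -/
def IsOutwardUnitNormal (Ω : Set E3) (G : Met3) (nvec : E3 → E3) : Prop :=
  ∀ y ∈ frontier Ω,
    (∑ i : Fin 3, ∑ j : Fin 3, G y i j * nvec y i * nvec y j) = 1 ∧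
    (∀ v : E3, TangentTo (frontier Ω) y v →
      (∑ i : Fin 3, ∑ j : Fin 3, G y i j * nvec y i * v j) = 0) ∧
    (∃ δ : ℝ, 0 < δ ∧ ∀ t : ℝ, 0 < t → t < δ → y + t • nvec y ∉ closure Ω)

/-!
At a boundary point write `h = g⁻¹`. Differentiating `g h = 1` gives
`∂_k h^{ij} = -h^{ia} Γ^j_{ka} - h^{ja} Γ^i_{ka}`, so both normal derivatives `h^{3k} ∂_k h^{3j}`
are contractions of Christoffel symbols against rows of `h`. The inverse of the induced metric
is the Schur complement `g̸^{AB} = h^{AB} - h^{A3} h^{3B} / h^{33}`, hence every contraction splits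
as `h^{ij} T_{ij} = g̸^{AB} T_{AB} + h^{3i} h^{3j} T_{ij} / h^{33}`. Harmonicity of `x^k`
(`h^{ij} Γ^k_{ij} = 0`) therefore trades `h^{3i} h^{3j} Γ^k_{ij}` for `-h^{33} g̸^{AB} Γ^k_{AB}`.
For `k = 3` this is `tr Θ` up to the lapse. For `k = A`, the identity
`h^{33} Γ^A_{BC} = h^{3A} Γ^3_{BC} + h^{33} Γ̸^A_{BC}` and boundary harmonicity
`g̸^{BC} Γ̸^A_{BC} = 0` reduce it to `tr Θ` again.
-/

section Christoffel

variable {ι : Type*} [Fintype ι]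

/-- `h` is an inverse metric and `dg k i j` stands for `∂_k g_{ij}`, both at one point. -/
def christoffel (h : Matrix ι ι ℝ) (dg : ι → ι → ι → ℝ) (k i j : ι) : ℝ :=
  (1/2) * ∑ l, h k l * (dg i j l + dg j i l - dg l i j)

variable {h : Matrix ι ι ℝ} {dg : ι → ι → ι → ℝ}

theorem christoffel_comm (hdg : ∀ k i j, dg k i j = dg k j i) (k i j : ι) :
    christoffel h dg k i j = christoffel h dg k j i := by
  unfold christoffel
  congr 1
  refine Finset.sum_congr rfl fun l _ => ?_
  rw [hdg l i j]
  ring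

theorem sum_inv_deriv_inv_eq_christoffel (hh : h.IsSymm) (hdg : ∀ k i j, dg k i j = dg k j i)
    (k i j : ι) :
    ∑ a, ∑ b, h i a * dg k a b * h b j
      = ∑ a, h j a * christoffel h dg i k a + ∑ a, h i a * christoffel h dg j k a := by
  calc ∑ a, ∑ b, h i a * dg k a b * h b j
      = ∑ a, ∑ b, (h j b * ((1/2) * (h i a * (dg k b a + dg b k a - dg a k b)))
          + h i a * ((1/2) * (h j b * (dg k a b + dg a k b - dg b k a)))) := by
        refine Finset.sum_congr rfl fun a _ => Finset.sum_congr rfl fun b _ => ?_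
        rw [hh.apply j b, hdg k b a]
        ring
    _ = _ := by
        simp only [christoffel, Finset.sum_add_distrib, Finset.mul_sum]
        rw [Finset.sum_comm]

end Christoffel

section Schur

open Fin

variable {n : ℕ}

/-- For `h = g⁻¹` this is `g̸⁻¹`, the inverse of the `castSucc`-block of `g`
(`inv_submatrix_castSucc`). -/
def schurInv (h : Matrix (Fin (n+1)) (Fin (n+1)) ℝ) : Matrix (Fin n) (Fin n) ℝ :=
  Matrix.of fun A B => h (castSucc A) (castSucc B)
    - h (castSucc A) (last n) * h (last n) (castSucc B) / h (last n) (last n)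

variable {h : Matrix (Fin (n+1)) (Fin (n+1)) ℝ}

theorem inv_submatrix_castSucc {g : Matrix (Fin (n+1)) (Fin (n+1)) ℝ} (hgh : g * h = 1)
    (hL : h (last n) (last n) ≠ 0) :
    (g.submatrix castSucc castSucc)⁻¹ = schurInv h := by
  refine Matrix.inv_eq_right_inv ?_
  have row : ∀ A j, ∑ C : Fin n, g (castSucc A) (castSucc C) * h (castSucc C) j
      = (1 : Matrix (Fin (n+1)) (Fin (n+1)) ℝ) (castSucc A) j
        - g (castSucc A) (last n) * h (last n) j := by
    intro A j
    rw [← hgh, Matrix.mul_apply, Fin.sum_univ_castSucc]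
    ring
  ext A B
  have hB := row A (castSucc B)
  have hL' := row A (last n)
  simp only [Matrix.one_apply, castSucc_inj, (castSucc_lt_last A).ne, if_false] at hB hL'
  simp only [schurInv, Matrix.mul_apply, Matrix.submatrix_apply, Matrix.of_apply, mul_sub,
    Finset.sum_sub_distrib, Matrix.one_apply]
  simp only [← mul_div_assoc, ← mul_assoc, ← Finset.sum_div, ← Finset.sum_mul, hB, hL']
  field_simp
  ring

theorem sum_mul_eq_schurInv_add (hL : h (last n) (last n) ≠ 0) (A : Fin n)
    (c : Fin (n+1) → ℝ) :
    ∑ l, h (castSucc A) l * c l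
      = ∑ D, schurInv h A D * c (castSucc D)
        + h (castSucc A) (last n) / h (last n) (last n) * ∑ l, h (last n) l * c l := by
  simp only [Fin.sum_univ_castSucc, schurInv, Matrix.of_apply, sub_mul, Finset.sum_sub_distrib]
  simp only [div_mul_eq_mul_div, mul_assoc, ← Finset.mul_sum, ← Finset.sum_div]
  field_simp
  ring

theorem sum_sum_eq_schurInv_add (hL : h (last n) (last n) ≠ 0)
    (T : Fin (n+1) → Fin (n+1) → ℝ) :
    ∑ i, ∑ j, h i j * T i j
      = ∑ A, ∑ B, schurInv h A B * T (castSucc A) (castSucc B)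
        + (∑ i, ∑ j, h i (last n) * h (last n) j * T i j) / h (last n) (last n) := by
  conv_lhs => rw [Fin.sum_univ_castSucc]; simp only [sum_mul_eq_schurInv_add hL]
  rw [Fin.sum_univ_castSucc (f := fun i => ∑ j, h i (last n) * h (last n) j * T i j)]
  simp only [Finset.sum_add_distrib, mul_assoc, ← Finset.mul_sum, add_div, Finset.sum_div]
  field_simp
  ring

theorem sum_last_mul_last_eq_of_contract_eq_zero (hL : h (last n) (last n) ≠ 0)
    {T : Fin (n+1) → Fin (n+1) → ℝ} (hT : ∑ i, ∑ j, h i j * T i j = 0) :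
    ∑ i, ∑ j, h i (last n) * h (last n) j * T i j
      = -h (last n) (last n) * ∑ A, ∑ B, schurInv h A B * T (castSucc A) (castSucc B) := by
  rw [sum_sum_eq_schurInv_add hL, add_eq_zero_iff_eq_neg', div_eq_iff hL] at hT
  rw [hT]
  ring

end Schur

section NormalDerivative

open Fin

/- `dh k i j` stands for `∂_k h^{ij}`, and `last n` is the normal direction. -/
variable {n : ℕ} {h : Matrix (Fin (n+1)) (Fin (n+1)) ℝ}
  {dg dh : Fin (n+1) → Fin (n+1) → Fin (n+1) → ℝ}

theorem mul_christoffel_castSucc (hL : h (last n) (last n) ≠ 0) (A B C : Fin n) :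
    h (last n) (last n) * christoffel h dg (castSucc A) (castSucc B) (castSucc C)
      = h (castSucc A) (last n) * christoffel h dg (last n) (castSucc B) (castSucc C)
        + h (last n) (last n) * christoffel (schurInv h)
            (fun K I J => dg (castSucc K) (castSucc I) (castSucc J)) A B C := by
  simp only [christoffel]
  rw [sum_mul_eq_schurInv_add hL A]
  field_simp
  ring

theorem deriv_inv_eq_neg_christoffel (hh : h.IsSymm) (hdg : ∀ k i j, dg k i j = dg k j i)
    (hdh : ∀ k i j, dh k i j = -∑ a, ∑ b, h i a * dg k a b * h b j) (k i j : Fin (n+1)) :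
    dh k i j = -(∑ a, h j a * christoffel h dg i k a + ∑ a, h i a * christoffel h dg j k a) := by
  rw [hdh, sum_inv_deriv_inv_eq_christoffel hh hdg]

theorem sum_mul_deriv_last_last (hh : h.IsSymm) (hdg : ∀ k i j, dg k i j = dg k j i)
    (hdh : ∀ k i j, dh k i j = -∑ a, ∑ b, h i a * dg k a b * h b j) (i : Fin (n+1)) :
    ∑ k, h i k * dh k (last n) (last n)
      = -2 * ∑ k, ∑ a, h k i * h (last n) a * christoffel h dg (last n) k a := by
  have hdL : ∀ k, dh k (last n) (last n)
      = -2 * ∑ a, h (last n) a * christoffel h dg (last n) k a := by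
    intro k
    rw [deriv_inv_eq_neg_christoffel hh hdg hdh]
    ring
  simp only [hdL, Finset.mul_sum]
  refine Finset.sum_congr rfl fun k _ => Finset.sum_congr rfl fun a _ => ?_
  rw [hh.apply k i]
  ring

theorem sum_last_mul_deriv_last_last_of_harmonic (hh : h.IsSymm)
    (hdg : ∀ k i j, dg k i j = dg k j i)
    (hdh : ∀ k i j, dh k i j = -∑ a, ∑ b, h i a * dg k a b * h b j)
    (hL : h (last n) (last n) ≠ 0)
    (hharm : ∑ i, ∑ j, h i j * christoffel h dg (last n) i j = 0) :
    ∑ k, h (last n) k * dh k (last n) (last n)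
      = 2 * h (last n) (last n) *
          ∑ A, ∑ B, schurInv h A B * christoffel h dg (last n) (castSucc A) (castSucc B) := by
  rw [sum_mul_deriv_last_last hh hdg hdh, sum_last_mul_last_eq_of_contract_eq_zero hL hharm]
  ring

theorem sum_last_mul_deriv_last_castSucc_of_harmonic (hh : h.IsSymm)
    (hdg : ∀ k i j, dg k i j = dg k j i)
    (hdh : ∀ k i j, dh k i j = -∑ a, ∑ b, h i a * dg k a b * h b j)
    (hL : h (last n) (last n) ≠ 0) (A : Fin n)
    (hharm : ∑ i, ∑ j, h i j * christoffel h dg (castSucc A) i j = 0)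
    (hbdry : ∑ B, ∑ C, schurInv h B C * christoffel (schurInv h)
      (fun K I J => dg (castSucc K) (castSucc I) (castSucc J)) A B C = 0) :
    ∑ k, h (last n) k * dh k (last n) (castSucc A)
      = (∑ B, ∑ C, schurInv h B C * christoffel h dg (last n) (castSucc B) (castSucc C))
          * h (last n) (castSucc A)
        + (1/2) * ∑ m, h (castSucc A) m * dh m (last n) (last n) := by
  have hsplit : ∑ k, h (last n) k * dh k (last n) (castSucc A)
      = -∑ k, ∑ a, h k (last n) * h (castSucc A) a * christoffel h dg (last n) k a
        - ∑ k, ∑ a, h k (last n) * h (last n) a * christoffel h dg (castSucc A) k a := by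
    rw [← Finset.sum_neg_distrib, ← Finset.sum_sub_distrib]
    refine Finset.sum_congr rfl fun k _ => ?_
    rw [deriv_inv_eq_neg_christoffel hh hdg hdh, hh.apply k (last n), mul_neg, mul_add,
      Finset.mul_sum, Finset.mul_sum]
    simp only [mul_assoc]
    ring
  have htangential : ∑ k, h (castSucc A) k * dh k (last n) (last n)
      = -2 * ∑ k, ∑ a, h k (last n) * h (castSucc A) a * christoffel h dg (last n) k a := by
    rw [sum_mul_deriv_last_last hh hdg hdh, Finset.sum_comm]
    refine congrArg _ (Finset.sum_congr rfl fun k _ => Finset.sum_congr rfl fun a _ => ?_)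
    rw [christoffel_comm hdg, hh.apply (castSucc A) a, hh.apply k (last n)]
    ring
  have htrace : h (last n) (last n) *
        ∑ B, ∑ C, schurInv h B C * christoffel h dg (castSucc A) (castSucc B) (castSucc C)
      = h (castSucc A) (last n) *
        ∑ B, ∑ C, schurInv h B C * christoffel h dg (last n) (castSucc B) (castSucc C) := by
    rw [← add_zero (h (castSucc A) (last n) * _), ← mul_zero (h (last n) (last n)), ← hbdry]
    simp only [Finset.mul_sum, ← Finset.sum_add_distrib]
    refine Finset.sum_congr rfl fun B _ => Finset.sum_congr rfl fun C _ => ?_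
    linear_combination schurInv h B C * mul_christoffel_castSucc (dg := dg) hL A B C
  rw [hsplit, htangential, sum_last_mul_last_eq_of_contract_eq_zero hL hharm]
  rw [hh.apply (last n) (castSucc A)] at htrace
  linear_combination htrace

end NormalDerivative

section MatrixCalculus

variable {𝕜 : Type*} [NontriviallyNormedField 𝕜] {E : Type*} [NormedAddCommGroup E]
  [NormedSpace 𝕜 E] {ι : Type*} [Fintype ι] [DecidableEq ι] {M : E → Matrix ι ι 𝕜}
  {s : Set E} {y : E}

theorem differentiableWithinAt_matrix_det
    (hM : ∀ i j, DifferentiableWithinAt 𝕜 (fun w => M w i j) s y) :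
    DifferentiableWithinAt 𝕜 (fun w => (M w).det) s y := by
  simp only [Matrix.det_apply']
  exact DifferentiableWithinAt.fun_sum fun σ _ =>
    ((HasFDerivWithinAt.finsetProd fun i _ =>
      (hM (σ i) i).hasFDerivWithinAt).differentiableWithinAt).const_mul _

theorem differentiableWithinAt_adjugate_apply
    (hM : ∀ i j, DifferentiableWithinAt 𝕜 (fun w => M w i j) s y) (i j : ι) :
    DifferentiableWithinAt 𝕜 (fun w => (M w).adjugate i j) s y := by
  simp only [Matrix.adjugate_apply]
  refine differentiableWithinAt_matrix_det fun a b => ?_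
  simp only [Matrix.updateRow_apply]
  split_ifs
  · exact differentiableWithinAt_const _
  · exact hM a b

theorem differentiableWithinAt_matrix_inv_apply
    (hM : ∀ i j, DifferentiableWithinAt 𝕜 (fun w => M w i j) s y) (hdet : (M y).det ≠ 0)
    (i j : ι) :
    DifferentiableWithinAt 𝕜 (fun w => (M w)⁻¹ i j) s y := by
  simp only [Matrix.inv_def, Ring.inverse_eq_inv', Matrix.smul_apply, smul_eq_mul]
  exact ((differentiableWithinAt_matrix_det hM).inv hdet).mul
    (differentiableWithinAt_adjugate_apply hM i j)

theorem fderivWithin_matrix_inv_apply (hs : UniqueDiffWithinAt 𝕜 s y) (hy : y ∈ s)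
    (hM : ∀ i j, DifferentiableWithinAt 𝕜 (fun w => M w i j) s y)
    (hdet : ∀ w ∈ s, (M w).det ≠ 0) (v : E) (i j : ι) :
    fderivWithin 𝕜 (fun w => (M w)⁻¹ i j) s y v
      = -∑ a, ∑ b, (M y)⁻¹ i a * fderivWithin 𝕜 (fun w => M w a b) s y v * (M y)⁻¹ b j := by
  set D := Matrix.of fun a b => fderivWithin 𝕜 (fun w => M w a b) s y v
  set D' := Matrix.of fun a b => fderivWithin 𝕜 (fun w => (M w)⁻¹ a b) s y v
  have hinv := differentiableWithinAt_matrix_inv_apply hM (hdet y hy)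
  have hprod : D * (M y)⁻¹ + M y * D' = 0 := by
    ext a b
    have hconst : fderivWithin 𝕜 (fun w => ∑ m, M w a m * (M w)⁻¹ m b) s y
        = fderivWithin 𝕜 (fun _ => (1 : Matrix ι ι 𝕜) a b) s y :=
      fderivWithin_congr' (fun w hw => by
        rw [← Matrix.mul_apply, Matrix.mul_nonsing_inv _ (hdet w hw).isUnit]) hy
    have hderiv : fderivWithin 𝕜 (fun w => ∑ m, M w a m * (M w)⁻¹ m b) s y v
        = ∑ m, (D a m * (M y)⁻¹ m b + M y a m * D' m b) := by
      rw [fderivWithin_fun_sum hs fun m _ => (hM a m).fun_mul (hinv m b), sum_apply]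
      refine Finset.sum_congr rfl fun m _ => ?_
      rw [fderivWithin_fun_mul hs (hM a m) (hinv m b)]
      simp only [add_apply, smul_apply, smul_eq_mul, D, D', Matrix.of_apply]
      ring
    rw [hconst, fderivWithin_const_apply] at hderiv
    simpa [Matrix.mul_apply, Finset.sum_add_distrib] using hderiv.symm
  have hD' : D' = -((M y)⁻¹ * D * (M y)⁻¹) := by
    rw [← Matrix.nonsing_inv_mul_cancel_left (M y) D' (hdet y hy).isUnit,
      eq_neg_of_add_eq_zero_right hprod, Matrix.mul_neg, Matrix.mul_assoc]
  have := congrFun (congrFun hD' i) j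
  simp only [D', D, Matrix.of_apply, Matrix.neg_apply, Matrix.mul_apply, Finset.sum_mul] at this
  rw [this, Finset.sum_comm]

end MatrixCalculus

section HalfBall

theorem convex_upperHalf3 : Convex ℝ upperHalf3 :=
  convex_halfSpace_ge (f := fun v : E3 => v 2) ⟨fun _ _ => rfl, fun _ _ => rfl⟩ 0

theorem e3_two_mem_interior_upperHalf3 : e3 2 ∈ interior upperHalf3 := by
  have hopen : IsOpen {v : E3 | 0 < v 2} :=
    isOpen_lt continuous_const (EuclideanSpace.proj (2 : Fin 3)).continuous
  have hsub : {v : E3 | 0 < v 2} ⊆ interior upperHalf3 :=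
    interior_maximal (fun v (hv : 0 < v 2) => (hv.le : v ∈ upperHalf3)) hopen
  exact hsub (by simp [e3])

theorem uniqueDiffWithinAt_Bplus {x y : E3} {r : ℝ} (hy : y ∈ Bplus x r) :
    UniqueDiffWithinAt ℝ (Bplus x r) y := by
  rw [Bplus, Set.inter_comm, uniqueDiffWithinAt_inter (Metric.isOpen_ball.mem_nhds hy.1)]
  exact uniqueDiffOn_convex convex_upperHalf3 ⟨_, e3_two_mem_interior_upperHalf3⟩ y hy.2

def iotaL : E2 →L[ℝ] E3 :=
  (EuclideanSpace.proj (0 : Fin 2)).smulRight (e3 0)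
    + (EuclideanSpace.proj (1 : Fin 2)).smulRight (e3 1)

theorem coe_iotaL : ⇑iotaL = iota := rfl

theorem iota_apply_two (z : E2) : iota z 2 = 0 := by
  simp [iota, e3]

theorem iota_e2 (A : Fin 2) : iota (e2 A) = e3 (emb23 A) := by
  fin_cases A <;> ext i <;> fin_cases i <;> simp [iota, e2, e3, emb23]

theorem bot2_eq_preimage (x : E3) (r : ℝ) : bot2 x r = iota ⁻¹' Metric.ball x r := by
  ext z
  simp [bot2, BplusBot, Bplus, upperHalf3, iota_apply_two]

theorem isOpen_bot2 (x : E3) (r : ℝ) : IsOpen (bot2 x r) := by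
  rw [bot2_eq_preimage, ← coe_iotaL]
  exact Metric.isOpen_ball.preimage iotaL.continuous

theorem pd2_comp_iota {x : E3} {r : ℝ} {z : E2} (hz : z ∈ bot2 x r) {F : E3 → ℝ}
    (hF : DifferentiableWithinAt ℝ F (Bplus x r) (iota z)) (A : Fin 2) :
    pd2 (bot2 x r) A (fun w => F (iota w)) z = pd3 (Bplus x r) (emb23 A) F (iota z) := by
  have hcomp : HasFDerivWithinAt (fun w => F (iota w))
      ((fderivWithin ℝ F (Bplus x r) (iota z)).comp iotaL) (bot2 x r) z :=
    hF.hasFDerivWithinAt.comp z iotaL.hasFDerivWithinAt fun w hw => hw.1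
  rw [pd2, pd3, hcomp.fderivWithin ((isOpen_bot2 x r).uniqueDiffWithinAt hz),
    ContinuousLinearMap.comp_apply, coe_iotaL, iota_e2]

end HalfBall

theorem Γ3_eq_christoffel (Ω : Set E3) (G : Met3) (y : E3) :
    Γ3 Ω G y = christoffel (G y)⁻¹ (fun k i j => pd3 Ω k (fun w => G w i j) y) := rfl

theorem trTheta_eq (Ω : Set E3) (G : Met3) (y : E3) :
    trTheta Ω G y = -(1 / Real.sqrt ((G y)⁻¹ 2 2)) *
      ∑ A, ∑ B, (indMet G y)⁻¹ A B * Γ3 Ω G y 2 (emb23 A) (emb23 B) := by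
  simp only [trTheta, theta3, Finset.mul_sum]
  exact Finset.sum_congr rfl fun A _ => Finset.sum_congr rfl fun B _ => by ring

namespace IsRiemOnBplus

variable {x : E3} {r : ℝ} {G : Met3} {y : E3}

theorem differentiableWithinAt (hG : IsRiemOnBplus x r G) (hy : y ∈ Bplus x r) (i j : Fin 3) :
    DifferentiableWithinAt ℝ (fun w => G w i j) (Bplus x r) y :=
  (hG.2 i j).differentiableOn (by simp) y hy

theorem pd3_comm (hG : IsRiemOnBplus x r G) (hy : y ∈ Bplus x r) (k i j : Fin 3) :
    pd3 (Bplus x r) k (fun w => G w i j) y = pd3 (Bplus x r) k (fun w => G w j i) y := by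
  rw [pd3, pd3, fderivWithin_congr' (fun w hw => (hG.1 w hw).1.apply j i) hy]

theorem pd3_inv (hG : IsRiemOnBplus x r G) (hy : y ∈ Bplus x r) (k i j : Fin 3) :
    pd3 (Bplus x r) k (fun w => (G w)⁻¹ i j) y
      = -∑ a, ∑ b, (G y)⁻¹ i a * pd3 (Bplus x r) k (fun w => G w a b) y * (G y)⁻¹ b j :=
  fderivWithin_matrix_inv_apply (uniqueDiffWithinAt_Bplus hy) hy
    (fun a b => hG.differentiableWithinAt hy a b) (fun w hw => (hG.1 w hw).2.det_pos.ne')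
    (e3 k) i j

theorem inv_indMet (hG : IsRiemOnBplus x r G) (hy : y ∈ Bplus x r) :
    (indMet G y)⁻¹ = schurInv (G y)⁻¹ :=
  inv_submatrix_castSucc (Matrix.mul_nonsing_inv _ (hG.1 y hy).2.det_pos.ne'.isUnit)
    (hG.1 y hy).2.inv.diag_pos.ne'

theorem contrΓ2_bot2 (hG : IsRiemOnBplus x r G) {z : E2} (hz : z ∈ bot2 x r) (A : Fin 2) :
    contrΓ2 (bot2 x r) (Gb G) z A
      = ∑ B, ∑ C, schurInv (G (iota z))⁻¹ B C * christoffel (schurInv (G (iota z))⁻¹)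
          (fun K I J => pd3 (Bplus x r) (emb23 K) (fun w => G w (emb23 I) (emb23 J)) (iota z))
          A B C := by
  have hpd : ∀ K I J, pd2 (bot2 x r) K (fun w => Gb G w I J) z
      = pd3 (Bplus x r) (emb23 K) (fun w => G w (emb23 I) (emb23 J)) (iota z) :=
    fun K I J => pd2_comp_iota hz (hG.differentiableWithinAt hz.1 _ _) K
  simp only [contrΓ2, Γ2, hpd]
  simp only [Gb, hG.inv_indMet hz.1]
  rfl

end IsRiemOnBplus

theorem neumann_relations_boundary_harmonic_general (x : E3) (r : ℝ) (G : Met3)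
    (hG : IsRiemOnBplus x r G) (hbh : IsBdryHarmonic x r G) :
    ∀ z ∈ bot2 x r,
      (Nop (Bplus x r) G (fun w => (G w)⁻¹ 2 2) (iota z)
        = 2 * trTheta (Bplus x r) G (iota z) * (G (iota z))⁻¹ 2 2) ∧
      ∀ A : Fin 2,
        Nop (Bplus x r) G (fun w => (G w)⁻¹ 2 (emb23 A)) (iota z)
          = trTheta (Bplus x r) G (iota z) * (G (iota z))⁻¹ 2 (emb23 A)
            - (1/2) * (1 / Real.sqrt ((G (iota z))⁻¹ 2 2)) *
              ∑ mm : Fin 3, (G (iota z))⁻¹ (emb23 A) mm *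
                pd3 (Bplus x r) mm (fun w => (G w)⁻¹ 2 2) (iota z) := by
  intro z hz
  have hy : iota z ∈ Bplus x r := hz.1
  have hsymm := (hG.1 _ hy).1.inv
  have hdg := hG.pd3_comm hy
  have hdh := hG.pd3_inv hy
  have hL := (hG.1 _ hy).2.inv.diag_pos (i := 2) |>.ne'
  have hnormal := sum_last_mul_deriv_last_last_of_harmonic hsymm hdg hdh hL (hbh.1 _ hy 2)
  have htangential := fun A => sum_last_mul_deriv_last_castSucc_of_harmonic hsymm hdg hdh hL A
    (hbh.1 _ hy (emb23 A)) ((hG.contrΓ2_bot2 hz A).symm.trans (hbh.2 z hz A))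
  simp only [show Fin.last 2 = 2 from rfl] at hnormal htangential
  rw [trTheta_eq, hG.inv_indMet hy, Γ3_eq_christoffel]
  simp only [emb23]
  refine ⟨?_, fun A => ?_⟩
  · rw [Nop, hnormal]
    ring
  · rw [Nop, htangential A]
    ring

/-- **Neumann boundary relations in boundary harmonic coordinates** (Lemma 2.13): on
`B̲⁺(x,r)`, `N(g^{33}) = 2 (tr Θ) g^{33}` and
`N(g^{3A}) = (tr Θ) g^{3A} - ½ (g^{33})^{-1/2} g^{Am} ∂_m g^{33}`.
(The paper's coordinate `x³` is the third coordinate, index `2`; paper indices `A ∈ {1,2}`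
correspond to `emb23 A`.) -/
theorem neumann_relations_boundary_harmonic (x : E3) (r : ℝ) (hr : 0 < r) (G : Met3)
    (hG : IsRiemOnBplus x r G) (hbh : IsBdryHarmonic x r G) :
    ∀ z ∈ bot2 x r,
      (Nop (Bplus x r) G (fun w => (G w)⁻¹ 2 2) (iota z)
        = 2 * trTheta (Bplus x r) G (iota z) * (G (iota z))⁻¹ 2 2) ∧
      ∀ A : Fin 2,
        Nop (Bplus x r) G (fun w => (G w)⁻¹ 2 (emb23 A)) (iota z)
          = trTheta (Bplus x r) G (iota z) * (G (iota z))⁻¹ 2 (emb23 A)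
            - (1/2) * (1 / Real.sqrt ((G (iota z))⁻¹ 2 2)) *
              ∑ mm : Fin 3, (G (iota z))⁻¹ (emb23 A) mm *
                pd3 (Bplus x r) mm (fun w => (G w)⁻¹ 2 2) (iota z) :=
  neumann_relations_boundary_harmonic_general x r G hG hbh
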